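/- arXiv:2206.03748 — 3 statements merged into one kernel-verified Lean document; each statement's English description precedes it below -/
import Mathlib

section
/- Let m > 0 and p, q ∈ ℝ³. Then | |q|·λ(p − q) − |p − q|·λ(q) | ≤ m·|p|, and consequently | |q|/λ(q) − |p − q|/λ(p − q) | ≤ m·|p| / (λ(q)·λ(p − q)). -/
/-- `lam m p = √(|p|² + m²)`. -/
noncomputable def lam (m : ℝ) (p : EuclideanSpace ℝ (Fin 3)) : ℝ :=
  Real.sqrt (‖p‖ ^ 2 + m ^ 2)

lemma lam_sq (m : ℝ) (hm : 0 < m) (x : EuclideanSpace ℝ (Fin 3)) :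
    lam m x ^ 2 = ‖x‖ ^ 2 + m ^ 2 := by
  rw [lam, Real.sq_sqrt]; positivity

lemma lam_ge (m : ℝ) (hm : 0 < m) (x : EuclideanSpace ℝ (Fin 3)) :
    m ≤ lam m x := by
  rw [lam]
  have : m = Real.sqrt (m ^ 2) := by rw [Real.sqrt_sq hm.le]
  rw [this]
  apply Real.sqrt_le_sqrt
  nlinarith [sq_nonneg ‖x‖, Real.sq_sqrt (sq_nonneg m)]

/-- For `m > 0` and `p, q ∈ ℝ³`:
`| |q|·λ(p − q) − |p − q|·λ(q) | ≤ m·|p|` and consequently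
`| |q|/λ(q) − |p − q|/λ(p − q) | ≤ m·|p| / (λ(q)·λ(p − q))`. -/
theorem lam_quotient_difference_bounds (m : ℝ) (hm : 0 < m)
    (p q : EuclideanSpace ℝ (Fin 3)) :
    |‖q‖ * lam m (p - q) - ‖p - q‖ * lam m q| ≤ m * ‖p‖ ∧
    |‖q‖ / lam m q - ‖p - q‖ / lam m (p - q)| ≤ m * ‖p‖ / (lam m q * lam m (p - q)) := by
  set a := ‖q‖ with ha
  set b := ‖p - q‖ with hb
  set La := lam m q with hLa
  set Lb := lam m (p - q) with hLb
  have ha0 : 0 ≤ a := norm_nonneg _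
  have hb0 : 0 ≤ b := norm_nonneg _
  have hLa2 : La ^ 2 = a ^ 2 + m ^ 2 := lam_sq m hm q
  have hLb2 : Lb ^ 2 = b ^ 2 + m ^ 2 := lam_sq m hm (p - q)
  have hLam : m ≤ La := lam_ge m hm q
  have hLbm : m ≤ Lb := lam_ge m hm (p - q)
  have hLap : 0 < La := lt_of_lt_of_le hm hLam
  have hLbp : 0 < Lb := lt_of_lt_of_le hm hLbm
  have htri : |a - b| ≤ ‖p‖ := by
    have h := abs_norm_sub_norm_le q (q - p)
    have e1 : ‖q - (q - p)‖ = ‖p‖ := by congr 1; abel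
    have e2 : ‖q - p‖ = ‖p - q‖ := norm_sub_rev _ _
    rw [e1, e2] at h
    exact h
  have h1 : |a * Lb - b * La| ≤ m * ‖p‖ := by
    have hid : (a * Lb - b * La) * (a * Lb + b * La) = m ^ 2 * (a - b) * (a + b) := by
      linear_combination a ^ 2 * hLb2 - b ^ 2 * hLa2
    have hS : m * (a + b) ≤ a * Lb + b * La := by
      nlinarith [mul_le_mul_of_nonneg_left hLbm ha0, mul_le_mul_of_nonneg_left hLam hb0]
    rcases eq_or_lt_of_le (add_nonneg ha0 hb0) with hab | hab
    · have ha' : a = 0 := by linarith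
      have hb' : b = 0 := by linarith
      rw [ha', hb']
      simp
      positivity
    · have hSpos : 0 < a * Lb + b * La := lt_of_lt_of_le (by nlinarith) hS
      have key : |a * Lb - b * La| * (a * Lb + b * La) ≤ m * ‖p‖ * (a * Lb + b * La) := by
        have e1 : |a * Lb - b * La| * (a * Lb + b * La)
            = m ^ 2 * |a - b| * (a + b) := by
          rw [← abs_of_pos hSpos, ← abs_mul, hid, abs_mul, abs_mul, abs_of_pos hab,
            abs_of_nonneg (sq_nonneg m)]
        rw [e1]
        have e2 : m ^ 2 * |a - b| * (a + b) ≤ m ^ 2 * ‖p‖ * (a + b) := by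
          have := mul_le_mul_of_nonneg_left htri (sq_nonneg m)
          exact mul_le_mul_of_nonneg_right this hab.le
        refine e2.trans ?_
        have : m * ‖p‖ * (m * (a + b)) ≤ m * ‖p‖ * (a * Lb + b * La) :=
          mul_le_mul_of_nonneg_left hS (by positivity)
        nlinarith [this]
      exact le_of_mul_le_mul_right key hSpos
  refine ⟨h1, ?_⟩
  have h2 : |a / La - b / Lb| = |a * Lb - b * La| / (La * Lb) := by
    rw [div_sub_div _ _ hLap.ne' hLbp.ne', abs_div, abs_of_pos (mul_pos hLap hLbp),
      mul_comm La b]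
  rw [h2]
  gcongr
end

section
/- Let m > 0 and p, q ∈ ℝ³. Then | m/λ(q) − m/λ(p − q) | ≤ |p| / ( √(λ(q) + m) · √(λ(p − q) + m) ). -/
/-!
Put `a = λ(q)`, `b = λ(p - q)` and use the half-rapidity coordinates `u = √(a - m)`,
`U = √(a + m)` (so `|q| = u U`, `U² - u² = 2m`), and likewise `v`, `V` for `b`.
Both `m/a - m/b` and `|q| - |p - q|` are multiples of `u V - v U`, and comparing the
cofactors reduces the claim to `m (u V + v U) ≤ a b`. That follows from Lagrange's identity
`4ab = (UV - uv)² + (uV + vU)²`, AM-GM and `UV - uv ≥ 2m`. Finally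
`||q| - |p - q|| ≤ |p|`.
-/

section HalfRapidity

variable {m a b u v U V : ℝ}

theorem mul_add_le_mul_of_sq_eq (hm : 0 < m) (hu : 0 ≤ u) (hv : 0 ≤ v) (hU : 0 ≤ U)
    (hV : 0 ≤ V) (hu2 : u ^ 2 = a - m) (hU2 : U ^ 2 = a + m) (hv2 : v ^ 2 = b - m)
    (hV2 : V ^ 2 = b + m) :
    m * (u * V + v * U) ≤ a * b := by
  have hUV : u * v + 2 * m ≤ U * V := by
    rw [← pow_le_pow_iff_left₀ (by positivity) (by positivity) two_ne_zero]
    nlinarith [sq_nonneg (u - v)]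
  have lagrange : 4 * (a * b) = (U * V - u * v) ^ 2 + (u * V + v * U) ^ 2 := by
    linear_combination (-2 * b) * (hu2 + hU2) - (U ^ 2 + u ^ 2) * (hv2 + hV2)
  nlinarith [sq_nonneg (U * V - u * v - (u * V + v * U)),
    mul_le_mul_of_nonneg_right hUV (by positivity : 0 ≤ u * V + v * U)]

theorem abs_div_sub_div_le_of_sq_eq (hm : 0 < m) (hu : 0 ≤ u) (hv : 0 ≤ v) (hU : 0 ≤ U)
    (hV : 0 ≤ V) (hu2 : u ^ 2 = a - m) (hU2 : U ^ 2 = a + m) (hv2 : v ^ 2 = b - m)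
    (hV2 : V ^ 2 = b + m) :
    |m / a - m / b| ≤ |u * U - v * V| / (U * V) := by
  have ha : 0 < a := by nlinarith
  have hb : 0 < b := by nlinarith
  have hUV : 0 < U * V := mul_pos (by nlinarith) (by nlinarith)
  have hdiff : m / a - m / b = (v * U - u * V) * (u * V + v * U) / (2 * (a * b)) := by
    field_simp
    linear_combination (b + m) * hu2 - (a + m) * hv2 - v ^ 2 * hU2 + u ^ 2 * hV2
  have hnum : u * U - v * V = (u * V - v * U) * (U * V + u * v) / (2 * m) := by
    field_simp
    linear_combination v * V * (hU2 - hu2) - u * U * (hV2 - hv2)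
  have hcore := mul_add_le_mul_of_sq_eq hm hu hv hU hV hu2 hU2 hv2 hV2
  rw [hdiff, hnum, abs_div, abs_div, abs_of_pos (by positivity : 0 < 2 * (a * b)),
    abs_of_pos (by positivity : 0 < 2 * m), abs_mul, abs_mul, abs_sub_comm (v * U),
    abs_of_nonneg (by positivity : 0 ≤ u * V + v * U),
    abs_of_nonneg (by positivity : 0 ≤ U * V + u * v)]
  calc |u * V - v * U| * (u * V + v * U) / (2 * (a * b))
      ≤ |u * V - v * U| * (U * V) / (2 * m * (U * V)) := by
        rw [div_le_div_iff₀ (by positivity) (by positivity)]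
        linarith [mul_le_mul_of_nonneg_left hcore
          (by positivity : 0 ≤ 2 * (U * V) * |u * V - v * U|)]
    _ ≤ |u * V - v * U| * (U * V + u * v) / (2 * m) / (U * V) := by
        rw [div_div]
        gcongr
        linarith [mul_nonneg hu hv]

end HalfRapidity

theorem abs_div_sqrt_sub_div_sqrt_le {m s t : ℝ} (hm : 0 < m) (hs : 0 ≤ s) (ht : 0 ≤ t) :
    |m / √(s ^ 2 + m ^ 2) - m / √(t ^ 2 + m ^ 2)| ≤
      |s - t| / (√(√(s ^ 2 + m ^ 2) + m) * √(√(t ^ 2 + m ^ 2) + m)) := by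
  have m_le {x : ℝ} : m ≤ √(x ^ 2 + m ^ 2) :=
    Real.le_sqrt_of_sq_le (le_add_of_nonneg_left (sq_nonneg x))
  have sqrt_sub_mul_sqrt_add {x : ℝ} (hx : 0 ≤ x) :
      √(√(x ^ 2 + m ^ 2) - m) * √(√(x ^ 2 + m ^ 2) + m) = x := by
    rw [← Real.sqrt_mul (sub_nonneg.2 m_le), mul_comm, ← sq_sub_sq, Real.sq_sqrt (by positivity),
      add_sub_cancel_right, Real.sqrt_sq hx]
  have := abs_div_sub_div_le_of_sq_eq hm (Real.sqrt_nonneg _) (Real.sqrt_nonneg _)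
    (Real.sqrt_nonneg _) (Real.sqrt_nonneg _) (Real.sq_sqrt (sub_nonneg.2 m_le))
    (Real.sq_sqrt (by linarith [m_le (x := s)])) (Real.sq_sqrt (sub_nonneg.2 m_le))
    (Real.sq_sqrt (by linarith [m_le (x := t)]))
  rwa [sqrt_sub_mul_sqrt_add hs, sqrt_sub_mul_sqrt_add ht] at this

/-- For `m > 0` and `p, q ∈ ℝ³`:
`| m/λ(q) − m/λ(p − q) | ≤ |p| / ( √(λ(q) + m) · √(λ(p − q) + m) )`. -/
theorem lam_inverse_difference_bound (m : ℝ) (hm : 0 < m)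
    (p q : EuclideanSpace ℝ (Fin 3)) :
    |m / lam m q - m / lam m (p - q)| ≤
      ‖p‖ / (Real.sqrt (lam m q + m) * Real.sqrt (lam m (p - q) + m)) := by
  calc |m / lam m q - m / lam m (p - q)|
      ≤ |‖q‖ - ‖p - q‖| / (Real.sqrt (lam m q + m) * Real.sqrt (lam m (p - q) + m)) :=
        abs_div_sqrt_sub_div_sqrt_le hm (norm_nonneg _) (norm_nonneg _)
    _ ≤ ‖p‖ / (Real.sqrt (lam m q + m) * Real.sqrt (lam m (p - q) + m)) := by
        gcongr
        simpa [norm_sub_rev p q] using abs_norm_sub_norm_le q (q - p)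
end

section
/- Let m > 0 and p, q ∈ ℝ³. Then | q/λ(q) + (p − q)/λ(p − q) | ≤ m·|p| / (λ(q)·λ(p − q)) + 2·|p − q| / λ(p − q), where the left-hand side is the Euclidean norm of the ℝ³-vector q/λ(q) + (p − q)/λ(p − q). -/
lemma lam_pos' (m : ℝ) (hm : 0 < m) (p : EuclideanSpace ℝ (Fin 3)) : 0 < lam m p :=
  Real.sqrt_pos.mpr (by positivity)

lemma scalar_bound' (m s t : ℝ) (hm : 0 < m) (hs : 0 ≤ s) (ht : 0 ≤ t) :
    s * Real.sqrt (t ^ 2 + m ^ 2) ≤ t * Real.sqrt (s ^ 2 + m ^ 2) + m * |s - t| := by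
  set a := Real.sqrt (t ^ 2 + m ^ 2) with hadef
  set b := Real.sqrt (s ^ 2 + m ^ 2) with hbdef
  have ha2 : a ^ 2 = t ^ 2 + m ^ 2 := Real.sq_sqrt (by positivity)
  have hb2 : b ^ 2 = s ^ 2 + m ^ 2 := Real.sq_sqrt (by positivity)
  have ha0 : 0 ≤ a := Real.sqrt_nonneg _
  have hb0 : 0 ≤ b := Real.sqrt_nonneg _
  have ham : m ≤ a := by nlinarith
  have hbm : m ≤ b := by nlinarith
  have key : (s*a)^2 - (t*b)^2 = m^2*(s^2 - t^2) := by
    rw [mul_pow, mul_pow, ha2, hb2]; ring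
  rcases le_total s t with h | h
  · rw [abs_of_nonpos (by linarith)]
    have hsq : (s*a)^2 ≤ (t*b)^2 := by nlinarith [mul_nonneg (sub_nonneg.mpr h) (add_nonneg hs ht)]
    have hsa : s * a ≤ t * b := by
      have h1 : s*a = Real.sqrt ((s*a)^2) := (Real.sqrt_sq (mul_nonneg hs ha0)).symm
      have h2 : t*b = Real.sqrt ((t*b)^2) := (Real.sqrt_sq (mul_nonneg ht hb0)).symm
      rw [h1, h2]; exact Real.sqrt_le_sqrt hsq
    nlinarith
  · rw [abs_of_nonneg (by linarith)]
    rcases eq_or_lt_of_le h with h' | h'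
    · rw [← h']
      have : b = a := by rw [hbdef, hadef, ← h']
      rw [this]; nlinarith
    · have hs' : 0 < s := lt_of_le_of_lt ht h'
      have hD : 0 < s*a + t*b := by nlinarith [mul_nonneg ht hb0]
      have hmul : m*(s+t) ≤ s*a + t*b := by nlinarith
      have hmm : 0 ≤ m*(s-t) := by nlinarith
      nlinarith [key, hD, hmul, hmm, mul_nonneg hmm (sub_nonneg.mpr hmul)]

/-- For `m > 0` and `p, q ∈ ℝ³`:
`| q/λ(q) + (p − q)/λ(p − q) | ≤ m·|p|/(λ(q)·λ(p − q)) + 2·|p − q|/λ(p − q)`,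
the left-hand side being the Euclidean norm of the ℝ³-vector. -/
theorem lam_vector_sum_bound (m : ℝ) (hm : 0 < m)
    (p q : EuclideanSpace ℝ (Fin 3)) :
    ‖(lam m q)⁻¹ • q + (lam m (p - q))⁻¹ • (p - q)‖ ≤
      m * ‖p‖ / (lam m q * lam m (p - q)) + 2 * ‖p - q‖ / lam m (p - q) := by
  set A := lam m q with hA
  set B := lam m (p - q) with hB
  have hA0 : 0 < A := lam_pos' m hm q
  have hB0 : 0 < B := lam_pos' m hm (p - q)
  have htri : ‖(A)⁻¹ • q + (B)⁻¹ • (p - q)‖ ≤ ‖q‖ / A + ‖p - q‖ / B := by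
    calc ‖(A)⁻¹ • q + (B)⁻¹ • (p - q)‖ ≤ ‖(A)⁻¹ • q‖ + ‖(B)⁻¹ • (p - q)‖ := norm_add_le _ _
    _ = ‖q‖ / A + ‖p - q‖ / B := by
        rw [norm_smul, norm_smul, norm_inv, Real.norm_eq_abs, abs_of_pos hA0,
          norm_inv, Real.norm_eq_abs, abs_of_pos hB0]
        ring
  refine htri.trans ?_
  have hps : |‖q‖ - ‖p - q‖| ≤ ‖p‖ := by
    have h := abs_norm_sub_norm_le q (q - p)
    rw [show q - (q - p) = p by abel] at h
    rwa [norm_sub_rev q p] at h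
  have key : ‖q‖ * B ≤ ‖p - q‖ * A + m * ‖p‖ := by
    have h1 := scalar_bound' m ‖q‖ ‖p - q‖ hm (norm_nonneg _) (norm_nonneg _)
    have h2 : m * |‖q‖ - ‖p - q‖| ≤ m * ‖p‖ := mul_le_mul_of_nonneg_left hps hm.le
    have hBeq : Real.sqrt (‖p - q‖ ^ 2 + m ^ 2) = B := rfl
    have hAeq : Real.sqrt (‖q‖ ^ 2 + m ^ 2) = A := rfl
    rw [hBeq, hAeq] at h1
    linarith
  have hAB : (0:ℝ) < A * B := mul_pos hA0 hB0
  rw [div_add_div _ _ (ne_of_gt hA0) (ne_of_gt hB0),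
    show m * ‖p‖ / (A * B) + 2 * ‖p - q‖ / B = (m * ‖p‖ + 2 * ‖p - q‖ * A) / (A * B) by
      field_simp]
  rw [div_le_div_iff₀ hAB hAB]
  nlinarith [mul_nonneg (norm_nonneg (p - q)) hA0.le]
end
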